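/- In the bi-Cayley Jordan triple system T_B on B = C ⊕ C, every element x satisfies Q_x(x) = q(x)·x, where q(x₁,x₂) = n(x₁) + n(x₂). Consequently, every automorphism of T_B is an isometry of the quadratic form q: Aut(T_B) ≤ O(B,q). -/

import Mathlib

/-- The standard involution of a composition algebra:
`x̄ = n(x,1)·1 - x`, where `n(·,·)` is the polar form of the norm `n`. -/
def ocConj (F : Type) [Field F] (C : Type) [NonAssocRing C] [Module F C]
    (n : QuadraticForm F C) (x : C) : C :=
  QuadraticMap.polar n x 1 • (1 : C) - x

/-- The quadratic operator of the bi-Cayley Jordan pair / triple system on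
`B = C ⊕ C`:
`Q_x(y) = (x₁ȳ₁x₁ + x̄₂(y₂x₁), x₂ȳ₂x₂ + (x₂y₁)x̄₁)`. -/
def biQ (F : Type) [Field F] (C : Type) [NonAssocRing C] [Module F C]
    (n : QuadraticForm F C) (x y : C × C) : C × C :=
  ((x.1 * ocConj F C n y.1) * x.1 + ocConj F C n x.2 * (y.2 * x.1),
   (x.2 * ocConj F C n y.2) * x.2 + (x.2 * y.1) * ocConj F C n x.1)

/-!
Everything rests on the Kirmse identities `x̄(xy) = n(x)y` and `(yx)x̄ = n(x)y`, valid in any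
composition algebra with nondegenerate norm: linearizing `n(xy) = n(x)n(y)` shows that left
and right multiplication by `x̄` are the adjoints of those by `x`, and then `x̄(xy) - n(x)y` is
orthogonal to everything. Applied componentwise they give `Q_x(x) = q(x)x`. An automorphism `f`
then satisfies `q(x) f(x) = f(Q_x x) = Q_{f x}(f x) = q(f x) f(x)`, so `q(f x) = q(x)` as soon as
`x ≠ 0`.
-/

section CompositionAlgebra

variable {F : Type} [Field F] {C : Type} [NonAssocRing C] [Module F C] (n : QuadraticForm F C)

open QuadraticMap

lemma polar_mul_left_mul_left (hcomp : ∀ x y : C, n (x * y) = n x * n y) (x y z : C) :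
    polar n (x * y) (x * z) = n x * polar n y z := by
  simp only [polar, ← mul_add, hcomp]
  ring

lemma polar_mul_right_mul_right (hcomp : ∀ x y : C, n (x * y) = n x * n y) (x y z : C) :
    polar n (x * z) (y * z) = polar n x y * n z := by
  simp only [polar, ← add_mul, hcomp]
  ring

lemma polar_mul_mul_add_polar_mul_mul (hcomp : ∀ x y : C, n (x * y) = n x * n y)
    (x y z w : C) :
    polar n (x * y) (z * w) + polar n (z * y) (x * w) = polar n x z * polar n y w := by
  have h := polar_mul_left_mul_left n hcomp (x + z) y w
  rw [add_mul, add_mul, polar_add_left, polar_add_right, polar_add_right,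
    polar_mul_left_mul_left n hcomp, polar_mul_left_mul_left n hcomp] at h
  have hxz : n (x + z) = polar n x z + n x + n z := by
    simp only [polar]
    ring
  rw [hxz] at h
  linear_combination h

lemma polar_mul_left_eq_polar_ocConj_mul [IsScalarTower F C C]
    (hcomp : ∀ x y : C, n (x * y) = n x * n y) (x y z : C) :
    polar n (x * y) z = polar n y (ocConj F C n x * z) := by
  have h := polar_mul_mul_add_polar_mul_mul n hcomp x y 1 z
  rw [one_mul, one_mul] at h
  rw [ocConj, sub_mul, smul_mul_assoc, one_mul, polar_sub_right, polar_smul_right, smul_eq_mul]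
  linear_combination h

lemma polar_mul_right_eq_polar_mul_ocConj [SMulCommClass F C C]
    (hcomp : ∀ x y : C, n (x * y) = n x * n y) (x y z : C) :
    polar n (y * x) z = polar n y (z * ocConj F C n x) := by
  have h := polar_mul_mul_add_polar_mul_mul n hcomp y x z 1
  rw [mul_one, mul_one, polar_comm n (z * x) y] at h
  rw [ocConj, mul_sub, mul_smul_comm, mul_one, polar_sub_right, polar_smul_right, smul_eq_mul]
  linear_combination h

lemma norm_one_eq_one [Nontrivial C] (hcomp : ∀ x y : C, n (x * y) = n x * n y)
    (hnd : ∀ x : C, (∀ y : C, polar n x y = 0) → x = 0) : n 1 = 1 := by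
  have hidem : n 1 * n 1 = n 1 := by rw [← hcomp, one_mul]
  have hne : n 1 ≠ 0 := by
    intro h0
    have hzero : ∀ x : C, n x = 0 := fun x => by rw [← mul_one x, hcomp, h0, mul_zero]
    exact one_ne_zero (hnd 1 fun y => by simp only [polar, hzero, sub_zero])
  exact mul_left_cancel₀ hne (by rw [hidem, mul_one])

lemma ocConj_ocConj (hcomp : ∀ x y : C, n (x * y) = n x * n y)
    (hnd : ∀ x : C, (∀ y : C, polar n x y = 0) → x = 0) (x : C) :
    ocConj F C n (ocConj F C n x) = x := by
  rcases subsingleton_or_nontrivial C with _ | _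
  · exact Subsingleton.elim _ _
  have hpolar : polar n (ocConj F C n x) 1 = polar n x 1 := by
    rw [ocConj, polar_sub_left, polar_smul_left, polar_self, norm_one_eq_one n hcomp hnd,
      smul_eq_mul, nsmul_eq_mul]
    ring
  rw [ocConj, hpolar, ocConj, sub_sub_cancel]

lemma ocConj_mul_mul_self [IsScalarTower F C C] (hcomp : ∀ x y : C, n (x * y) = n x * n y)
    (hnd : ∀ x : C, (∀ y : C, polar n x y = 0) → x = 0) (x y : C) :
    ocConj F C n x * (x * y) = n x • y := by
  refine sub_eq_zero.mp (hnd _ fun z => ?_)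
  rw [polar_sub_left, polar_smul_left, polar_mul_left_eq_polar_ocConj_mul n hcomp,
    ocConj_ocConj n hcomp hnd, polar_mul_left_mul_left n hcomp, smul_eq_mul, sub_self]

lemma mul_mul_ocConj_self [SMulCommClass F C C] (hcomp : ∀ x y : C, n (x * y) = n x * n y)
    (hnd : ∀ x : C, (∀ y : C, polar n x y = 0) → x = 0) (x y : C) :
    (y * x) * ocConj F C n x = n x • y := by
  refine sub_eq_zero.mp (hnd _ fun z => ?_)
  rw [polar_sub_left, polar_smul_left, polar_mul_right_eq_polar_mul_ocConj n hcomp,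
    ocConj_ocConj n hcomp hnd, polar_mul_right_mul_right n hcomp, polar_comm, smul_eq_mul,
    mul_comm, sub_self]

lemma mul_ocConj_mul_self [SMulCommClass F C C] [IsScalarTower F C C]
    (hcomp : ∀ x y : C, n (x * y) = n x * n y)
    (hnd : ∀ x : C, (∀ y : C, polar n x y = 0) → x = 0) (x : C) :
    (x * ocConj F C n x) * x = n x • x := by
  have hnorm : x * ocConj F C n x = n x • (1 : C) := by
    simpa only [one_mul] using mul_mul_ocConj_self n hcomp hnd x 1
  rw [hnorm, smul_mul_assoc, one_mul]

lemma biQ_self [SMulCommClass F C C] [IsScalarTower F C C]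
    (hcomp : ∀ x y : C, n (x * y) = n x * n y)
    (hnd : ∀ x : C, (∀ y : C, polar n x y = 0) → x = 0) (x : C × C) :
    biQ F C n x x = (n x.1 + n x.2) • x := by
  ext <;> dsimp only [biQ]
  · rw [mul_ocConj_mul_self n hcomp hnd, ocConj_mul_mul_self n hcomp hnd, Prod.smul_fst,
      add_smul]
  · rw [mul_ocConj_mul_self n hcomp hnd, mul_mul_ocConj_self n hcomp hnd, Prod.smul_snd,
      add_smul, add_comm]

end CompositionAlgebra

theorem stmt_12_general (F : Type) [Field F]
    (C : Type) [NonAssocRing C] [Module F C] [SMulCommClass F C C] [IsScalarTower F C C]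
    (n : QuadraticForm F C)
    (hcomp : ∀ x y : C, n (x * y) = n x * n y)
    (hnd : ∀ x : C, (∀ y : C, QuadraticMap.polar n x y = 0) → x = 0) :
    (∀ x : C × C, biQ F C n x x = (n x.1 + n x.2) • x) ∧
    (∀ f : (C × C) ≃ₗ[F] (C × C),
      (∀ x y : C × C, f (biQ F C n x y) = biQ F C n (f x) (f y)) →
      ∀ x : C × C, n (f x).1 + n (f x).2 = n x.1 + n x.2) := by
  refine ⟨biQ_self n hcomp hnd, fun f hf x => ?_⟩
  rcases eq_or_ne x 0 with rfl | hx
  · simp only [map_zero, Prod.fst_zero, Prod.snd_zero]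
  have hfx : f x ≠ 0 := (map_ne_zero_iff f f.injective).mpr hx
  have hscalar : (n (f x).1 + n (f x).2) • f x = (n x.1 + n x.2) • f x := by
    rw [← biQ_self n hcomp hnd, ← hf, biQ_self n hcomp hnd, map_smul]
  exact smul_left_injective F hfx hscalar

/-- In the bi-Cayley Jordan triple system on `B = C ⊕ C` (Cayley algebra over a
field of characteristic not 2), every element satisfies `Q_x(x) = q(x)·x`
with `q(x₁,x₂) = n(x₁) + n(x₂)`; consequently every automorphism of the triple
system is an isometry of `q`. -/
theorem stmt_12 (F : Type) [Field F] (hchar : (2 : F) ≠ 0)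
    (C : Type) [NonAssocRing C] [Module F C] [SMulCommClass F C C] [IsScalarTower F C C]
    (n : QuadraticForm F C)
    (hcomp : ∀ x y : C, n (x * y) = n x * n y)
    (hnd : ∀ x : C, (∀ y : C, QuadraticMap.polar n x y = 0) → x = 0)
    (hdim : Module.finrank F C = 8) :
    (∀ x : C × C, biQ F C n x x = (n x.1 + n x.2) • x) ∧
    (∀ f : (C × C) ≃ₗ[F] (C × C),
      (∀ x y : C × C, f (biQ F C n x y) = biQ F C n (f x) (f y)) →
      ∀ x : C × C, n (f x).1 + n (f x).2 = n x.1 + n x.2) :=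
  stmt_12_general F C n hcomp hnd
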